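/- There exists a constant C > 0 such that for all real numbers a, b with 0 ≤ a ≤ b, one has Λ(a) + Λ(b) − Λ(a+b) ≤ C · a^{1/2} · (min(a,1))^{1/2} · (min(b,1))², where Λ(ξ) = ξ·√(tanh ξ / ξ) (with Λ(0)=0). -/

import Mathlib

/-!
For `ξ ≥ 0` we have `Λ ξ = √(ξ tanh ξ)`, and `tanh ξ ≤ min ξ 1`.

If `b ≥ 1`, monotonicity of `Λ` bounds the defect by `Λ a ≤ √(a · min a 1)`.

In general, AM–GM gives `2 Λ t ≤ t + tanh t`, and together with `tanh t ≤ t` this yields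
`Λ' t ≥ 1 - t²`. Hence `Λ (a + b) - Λ b ≥ a - ((a + b)³ - b³) / 3 ≥ a - 7 a b² / 3`, while
`Λ a ≤ a`, so the defect is at most `7 a b² / 3`, which is the claim when `b ≤ 1`.
-/

/-- The Whitham dispersion relation, `Λ ξ = ξ * √(tanh ξ / ξ)` (with `Λ 0 = 0`). -/
noncomputable def Lam (ξ : ℝ) : ℝ := ξ * Real.sqrt (Real.tanh ξ / ξ)

open Real Set

namespace Real

theorem tanh_le_tanh {x y : ℝ} (h : x ≤ y) : tanh x ≤ tanh y := by
  rwa [← artanh_le_artanh_iff ⟨neg_one_lt_tanh x, tanh_lt_one x⟩ ⟨neg_one_lt_tanh y, tanh_lt_one y⟩,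
    artanh_tanh, artanh_tanh]

theorem tanh_pos {x : ℝ} (hx : 0 < x) : 0 < tanh x := by
  rw [← artanh_lt_artanh_iff ⟨by norm_num, by norm_num⟩ ⟨neg_one_lt_tanh x, tanh_lt_one x⟩,
    artanh_zero, artanh_tanh]
  exact hx

theorem tanh_nonneg {x : ℝ} (hx : 0 ≤ x) : 0 ≤ tanh x :=
  tanh_zero ▸ tanh_le_tanh hx

theorem hasDerivAt_tanh (x : ℝ) : HasDerivAt tanh (1 - tanh x ^ 2) x := by
  have h := (hasDerivAt_sinh x).div (hasDerivAt_cosh x) (cosh_pos x).ne'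
  refine (h.congr_deriv ?_).congr_of_eventuallyEq (.of_forall tanh_eq_sinh_div_cosh)
  rw [tanh_eq_sinh_div_cosh]
  field_simp

theorem continuous_tanh : Continuous tanh := by
  rw [show tanh = fun x => sinh x / cosh x from funext tanh_eq_sinh_div_cosh]
  exact continuous_sinh.div continuous_cosh fun x => (cosh_pos x).ne'

theorem tanh_le_self {x : ℝ} (hx : 0 ≤ x) : tanh x ≤ x := by
  have hmono : Monotone fun t => t - tanh t :=
    monotone_of_hasDerivAt_nonneg (f' := fun t => tanh t ^ 2)
      (fun t => ((hasDerivAt_id t).sub (hasDerivAt_tanh t)).congr_deriv (by simp))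
      fun t => sq_nonneg _
  simpa using hmono hx

end Real

theorem lam_eq_sqrt {ξ : ℝ} (hξ : 0 ≤ ξ) : Lam ξ = √(ξ * tanh ξ) := by
  rcases hξ.eq_or_lt with rfl | hξ
  · simp [Lam]
  · rw [Lam, ← sqrt_sq hξ.le, ← sqrt_mul (sq_nonneg ξ), sqrt_sq hξ.le]
    congr 1
    field_simp

theorem continuousOn_lam : ContinuousOn Lam (Ici 0) :=
  (continuous_id.mul continuous_tanh).sqrt.continuousOn.congr fun _ hξ => lam_eq_sqrt hξ

theorem hasDerivAt_lam {t : ℝ} (ht : 0 < t) :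
    HasDerivAt Lam ((tanh t + t * (1 - tanh t ^ 2)) / (2 * √(t * tanh t))) t := by
  have h := ((hasDerivAt_id t).mul (hasDerivAt_tanh t)).sqrt (mul_pos ht (tanh_pos ht)).ne'
  simp only [id_eq, one_mul] at h
  exact h.congr_of_eventuallyEq <| (eventually_gt_nhds ht).mono fun _ hs => lam_eq_sqrt hs.le

theorem monotoneOn_lam : MonotoneOn Lam (Ici 0) := by
  intro x hx y hy hxy
  rw [lam_eq_sqrt hx, lam_eq_sqrt hy]
  exact sqrt_le_sqrt (mul_le_mul hxy (tanh_le_tanh hxy) (tanh_nonneg hx) hy)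

theorem lam_le_sqrt_mul_sqrt_min {a : ℝ} (ha : 0 ≤ a) : Lam a ≤ √a * √(min a 1) := by
  rw [lam_eq_sqrt ha, ← sqrt_mul ha]
  exact sqrt_le_sqrt (mul_le_mul_of_nonneg_left (le_min (tanh_le_self ha) (tanh_lt_one a).le) ha)

theorem lam_le_self {a : ℝ} (ha : 0 ≤ a) : Lam a ≤ a := by
  rw [lam_eq_sqrt ha]
  exact (sqrt_le_sqrt (mul_le_mul_of_nonneg_left (tanh_le_self ha) ha)).trans_eq (sqrt_mul_self ha)

theorem one_sub_sq_le_deriv_lam {t : ℝ} (ht : 0 < t) :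
    1 - t ^ 2 ≤ (tanh t + t * (1 - tanh t ^ 2)) / (2 * √(t * tanh t)) := by
  set τ := tanh t
  set s := √(t * τ)
  have hτ : 0 < τ := tanh_pos ht
  have hτt : τ ≤ t := tanh_le_self ht.le
  have hτ1 : τ < 1 := tanh_lt_one t
  have hs : 0 < s := sqrt_pos.2 (mul_pos ht hτ)
  have hs2 : s ^ 2 = t * τ := sq_sqrt (mul_pos ht hτ).le
  have am_gm : 2 * s ≤ t + τ := by nlinarith [sq_nonneg (t - τ)]
  -- for `t < 1` the claim reduces, via `am_gm`, to `τ ^ 2 ≤ t * (t + τ)`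
  rw [le_div_iff₀ (by positivity)]
  rcases le_total 1 t with h1 | h1
  · have : 0 ≤ t * (1 - τ ^ 2) := mul_nonneg ht.le (by nlinarith)
    nlinarith [mul_nonpos_of_nonpos_of_nonneg (by nlinarith : 1 - t ^ 2 ≤ 0) hs.le]
  · nlinarith [mul_le_mul_of_nonneg_left am_gm (by nlinarith : (0:ℝ) ≤ 1 - t ^ 2)]

theorem monotoneOn_lam_sub_add_cube : MonotoneOn (fun t => Lam t - t + t ^ 3 / 3) (Ici 0) := by
  refine monotoneOn_of_hasDerivWithinAt_nonneg (convex_Ici 0)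
    (f' := fun t => (tanh t + t * (1 - tanh t ^ 2)) / (2 * √(t * tanh t)) - 1 + t ^ 2)
    ((continuousOn_lam.sub continuousOn_id).add (by fun_prop)) (fun t ht => ?_) fun t ht => ?_
  · rw [interior_Ici] at ht
    exact (((hasDerivAt_lam ht).sub (hasDerivAt_id t)).add
      ((hasDerivAt_pow 3 t).div_const 3)).hasDerivWithinAt.congr_deriv (by push_cast; ring)
  · rw [interior_Ici] at ht
    linarith [one_sub_sq_le_deriv_lam ht]

theorem sub_sub_cube_le_lam_sub {x y : ℝ} (hx : 0 ≤ x) (hxy : x ≤ y) :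
    (y - x) - (y ^ 3 - x ^ 3) / 3 ≤ Lam y - Lam x := by
  have := monotoneOn_lam_sub_add_cube hx (hx.trans hxy) hxy
  simp only at this
  linarith

theorem lam_defect_le_lam {a b : ℝ} (ha : 0 ≤ a) (hb : 0 ≤ b) :
    Lam a + Lam b - Lam (a + b) ≤ Lam a := by
  have := monotoneOn_lam hb (add_nonneg ha hb : 0 ≤ a + b) (le_add_of_nonneg_left ha)
  linarith

theorem lam_defect_le_mul_sq {a b : ℝ} (ha : 0 ≤ a) (hab : a ≤ b) :
    Lam a + Lam b - Lam (a + b) ≤ 7 / 3 * a * b ^ 2 := by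
  have hb := ha.trans hab
  have hincr := sub_sub_cube_le_lam_sub hb (le_add_of_nonneg_left ha)
  have hcube : (a + b) ^ 3 - b ^ 3 ≤ 7 * a * b ^ 2 := by
    nlinarith [mul_le_mul_of_nonneg_left hab (mul_nonneg ha hb),
      mul_le_mul_of_nonneg_left hab (mul_nonneg ha ha)]
  nlinarith [lam_le_self ha]

/-- Upper bound of the subadditivity defect:
for `0 ≤ a ≤ b`, `Λ a + Λ b - Λ (a+b) ≲ a^{1/2} (a ∧ 1)^{1/2} (b ∧ 1)²`. -/
theorem resonance_upper_bound :
    ∃ C > (0 : ℝ), ∀ a b : ℝ, 0 ≤ a → a ≤ b →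
      Lam a + Lam b - Lam (a + b) ≤
        C * Real.sqrt a * Real.sqrt (min a 1) * (min b 1) ^ 2 := by
  refine ⟨7 / 3, by norm_num, fun a b ha hab => ?_⟩
  rcases le_total b 1 with hb1 | hb1
  · rw [min_eq_left (hab.trans hb1), min_eq_left hb1, mul_assoc (7 / 3 : ℝ) √a √a,
      mul_self_sqrt ha]
    exact lam_defect_le_mul_sq ha hab
  · rw [min_eq_right hb1, one_pow, mul_one, mul_assoc]
    calc Lam a + Lam b - Lam (a + b) ≤ Lam a := lam_defect_le_lam ha (ha.trans hab)
      _ ≤ √a * √(min a 1) := lam_le_sqrt_mul_sqrt_min ha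
      _ ≤ 7 / 3 * (√a * √(min a 1)) := le_mul_of_one_le_left (by positivity) (by norm_num)
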